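/- Let (A, +, ∘) be a left brace of cardinality p^n for a prime p and a natural number n, and let k be a natural number with p^{k(p−1)}·A = 0. Assume that p^k·A, ann(p^k) and ann(p^{2k}) are ideals of A and that x * y ∈ ann(p^k) for all x ∈ p^k·A and y ∈ ann(p^{2k}). Let ℘ : p^k·A → A be a function with p^k·℘(x) = x for all x ∈ p^k·A. Then the operation [x] ⊙ [y] = [℘((p^k·x) * y)] on A/ann(p^{2k}) is well defined: if x − x' ∈ ann(p^{2k}) and y − y' ∈ ann(p^{2k}), then ℘((p^k·x) * y) − ℘((p^k·x') * y') ∈ ann(p^{2k}). -/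
import Mathlib


/-- A left brace: `(A, +)` abelian group, `(A, ∘)` a group (with identity `cone`
and inverse `cinv`), satisfying `a ∘ (b + c) + a = a ∘ b + a ∘ c`. -/
class LeftBrace (A : Type*) extends AddCommGroup A where
  circ : A → A → A
  cone : A
  cinv : A → A
  circ_assoc : ∀ a b c : A, circ (circ a b) c = circ a (circ b c)
  circ_cone : ∀ a : A, circ a cone = a
  cone_circ : ∀ a : A, circ cone a = a
  circ_cinv : ∀ a : A, circ a (cinv a) = cone
  cinv_circ : ∀ a : A, circ (cinv a) a = cone
  circ_add : ∀ a b c : A, circ a (b + c) + a = circ a b + circ a c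

namespace LeftBrace

variable {A : Type*} [LeftBrace A]

/-- The brace operation `a * b = a ∘ b - a - b`. -/
def bstar (a b : A) : A := circ a b - a - b

/-- `ann (p^i) = {a : p^i • a = 0}`. -/
def ann (p i : ℕ) : Set A := {a : A | (p ^ i : ℕ) • a = 0}

/-- `p^i • A = {p^i • a : a ∈ A}`. -/
def pA (p i : ℕ) : Set A := Set.range (fun a : A => (p ^ i : ℕ) • a)

/-- An ideal of a left brace: an additive subgroup closed under `*` on both sides. -/
def IsIdeal (I : Set A) : Prop :=
  (0 : A) ∈ I ∧ (∀ x ∈ I, ∀ y ∈ I, x + y ∈ I) ∧ (∀ x ∈ I, -x ∈ I) ∧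
  (∀ a : A, ∀ x ∈ I, bstar a x ∈ I) ∧ (∀ a : A, ∀ x ∈ I, bstar x a ∈ I)

/-- `eIter a b m = e'_m(a,b)` for `m ≥ 1`, with `eIter a b 0 = b`;
so `e'_1(a,b) = a * b` and `e'_{m+1}(a,b) = a * e'_m(a,b)`. -/
def eIter (a b : A) : ℕ → A
  | 0 => b
  | m + 1 => bstar a (eIter a b m)

/-- `circPow a j = a^{∘ j}`, the `j`-fold `∘`-product of `a` with itself. -/
def circPow (a : A) : ℕ → A
  | 0 => cone
  | j + 1 => circ a (circPow a j)

/-- Property 1 (with `c = ⌊(p-1)/4⌋`). -/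
def Property1 (p : ℕ) (A : Type*) [LeftBrace A] : Prop :=
  (∀ a b : A, eIter a b ((p - 1) / 4) ∈ pA p 1) ∧
  (∀ i : ℕ, 1 ≤ i → ∀ a : A, ∀ b ∈ ann p i, eIter a b ((p - 1) / 4) ∈ ann p (i - 1))

end LeftBrace

open LeftBrace

open LeftBrace in
lemma LeftBrace.circ_eq_sub {A : Type*} [LeftBrace A] (a b c : A) :
    circ a (b + c) = circ a b + circ a c - a :=
  eq_sub_of_add_eq (circ_add a b c)

open LeftBrace in
lemma LeftBrace.circ_zero' {A : Type*} [LeftBrace A] (a : A) : circ a 0 = a := by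
  have h := circ_add a 0 0
  rw [add_zero] at h
  exact (add_left_cancel h).symm

open LeftBrace in
lemma LeftBrace.cone_eq_zero' {A : Type*} [LeftBrace A] : (cone : A) = 0 := by
  have h1 : circ (cone : A) 0 = cone := circ_zero' _
  have h2 : circ (cone : A) 0 = 0 := cone_circ 0
  rw [h2] at h1; exact h1.symm


theorem statement1 {A : Type*} [LeftBrace A] [Fintype A] (p n k : ℕ) (hp : p.Prime)
    (hcard : Fintype.card A = p ^ n)
    (hk : ∀ a : A, (p ^ (k * (p - 1)) : ℕ) • a = 0)
    (h1 : IsIdeal (pA p k : Set A)) (h2 : IsIdeal (ann p k : Set A))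
    (h3 : IsIdeal (ann p (2 * k) : Set A))
    (h4 : ∀ x : A, x ∈ pA p k → ∀ y ∈ ann p (2 * k), bstar x y ∈ ann p k)
    (wp : A → A) (hwp : ∀ x : A, x ∈ pA p k → (p ^ k : ℕ) • wp x = x) :
    ∀ x x' y y' : A, x - x' ∈ ann p (2 * k) → y - y' ∈ ann p (2 * k) →
      wp (bstar ((p ^ k : ℕ) • x) y) - wp (bstar ((p ^ k : ℕ) • x') y') ∈ ann p (2 * k) := by
  intro x x' y y' hx hy
  have hadd : ∀ u ∈ (ann p k : Set A), ∀ v ∈ (ann p k : Set A), u + v ∈ (ann p k : Set A) := h2.2.1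
  have hneg : ∀ u ∈ (ann p k : Set A), -u ∈ (ann p k : Set A) := h2.2.2.1
  have hbl : ∀ a : A, ∀ u ∈ (ann p k : Set A), bstar a u ∈ (ann p k : Set A) := h2.2.2.2.1
  have hbr : ∀ a : A, ∀ u ∈ (ann p k : Set A), bstar u a ∈ (ann p k : Set A) := h2.2.2.2.2
  have hsub : ∀ u ∈ (ann p k : Set A), ∀ v ∈ (ann p k : Set A), u - v ∈ (ann p k : Set A) := by
    intro u hu v hv
    rw [sub_eq_add_neg]; exact hadd _ hu _ (hneg _ hv)
  set a : A := (p ^ k : ℕ) • x with ha_def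
  set a' : A := (p ^ k : ℕ) • x' with ha'_def
  have ha : a ∈ (pA p k : Set A) := ⟨x, rfl⟩
  have ha' : a' ∈ (pA p k : Set A) := ⟨x', rfl⟩
  have hpp : (p : ℕ) ^ (2 * k) = p ^ k * p ^ k := by rw [two_mul, pow_add]
  have hd : a - a' ∈ (ann p k : Set A) := by
    show (p ^ k : ℕ) • (a - a') = 0
    have hx' : (p ^ (2 * k) : ℕ) • (x - x') = 0 := hx
    rw [ha_def, ha'_def, ← smul_sub, ← mul_smul, ← pow_add, ← two_mul]
    exact hx'
  set e : A := circ (cinv a') a with he_def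
  have hae : circ a' e = a := by rw [he_def, ← circ_assoc, circ_cinv, cone_circ]
  have he : e ∈ (ann p k : Set A) := by
    have hsplit : a = a' + (a - a') := by abel
    have h5 : e = bstar (cinv a') (a - a') + (a - a') := by
      rw [he_def]
      conv_lhs => rw [hsplit]
      rw [circ_eq_sub, cinv_circ, cone_eq_zero', bstar]
      abel
    rw [h5]
    exact hadd _ (hbl _ _ hd) _ hd
  set w : A := circ e y' - y' with hw_def
  have hw : w ∈ (ann p k : Set A) := by
    have : w = bstar e y' + e := by rw [hw_def, bstar]; abel
    rw [this]
    exact hadd _ (hbr _ _ he) _ he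
  have hcw : circ a' w = bstar a' w + a' + w := by rw [bstar]; abel
  have hey : circ e y' = y' + w := by rw [hw_def]; abel
  have h6 : circ a y' = circ a' (circ e y') := by rw [← circ_assoc, hae]
  have hcy' : circ a y' = circ a' y' + bstar a' w + w := by
    rw [h6, hey, circ_eq_sub, hcw]; abel
  have h5 : circ a y = circ a (y - y') + circ a y' - a := by
    rw [← circ_eq_sub, sub_add_cancel]
  have hkey : bstar a y - bstar a' y' =
      bstar a (y - y') + (bstar a' w + w) - (a - a') := by
    have hdiff : circ a y' - circ a' y' = bstar a' w + w := by rw [hcy']; abel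
    have expand : bstar a y - bstar a' y' =
        bstar a (y - y') + (circ a y' - circ a' y') - (a - a') := by
      simp only [bstar]
      rw [h5]
      abel
    rw [expand, hdiff]
  have hfirst : bstar a (y - y') ∈ (ann p k : Set A) := h4 a ha _ hy
  have hmain : bstar a y - bstar a' y' ∈ (ann p k : Set A) := by
    rw [hkey]
    exact hsub _ (hadd _ hfirst _ (hadd _ (hbl _ _ hw) _ hw)) _ hd
  have hu : bstar a y ∈ (pA p k : Set A) := h1.2.2.2.2 y a ha
  have hu' : bstar a' y' ∈ (pA p k : Set A) := h1.2.2.2.2 y' a' ha'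
  show (p ^ (2 * k) : ℕ) • (wp (bstar a y) - wp (bstar a' y')) = 0
  rw [smul_sub, hpp, mul_smul, mul_smul, hwp _ hu, hwp _ hu', ← smul_sub]
  exact hmain
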